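/- arXiv:2507.04533 — 6 statements merged into one kernel-verified Lean document; each statement's English description precedes it below -/
import Mathlib

section
/- Truth of a tense formula of modal degree n at a point x in a general frame depends only on the n-step reachable part: F, x ⊨ φ if and only if F restricted to R#^{md(φ)}[x], x ⊨ φ. -/
/-- Tense formulas over ⊥, →, □, ⧫ (past diamond). -/
inductive TForm : Type
  | var : ℕ → TForm
  | bot : TForm
  | imp : TForm → TForm → TForm
  | box : TForm → TForm
  | bdia : TForm → TForm

namespace TForm
def neg (φ : TForm) : TForm := imp φ bot
def top : TForm := neg bot
def or' (φ ψ : TForm) : TForm := imp (neg φ) ψ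
def and' (φ ψ : TForm) : TForm := neg (imp φ (neg ψ))
def dia (φ : TForm) : TForm := neg (box (neg φ))
def bbox (φ : TForm) : TForm := neg (bdia (neg φ))
end TForm

variable {X : Type*}

/-- Truth of a tense formula at a point of a Kripke model. -/
def sat (R : X → X → Prop) (V : ℕ → X → Prop) : X → TForm → Prop
  | x, .var n => V n x
  | _, .bot => False
  | x, .imp φ ψ => sat R V x φ → sat R V x ψ
  | x, .box φ => ∀ y, R x y → sat R V y φ
  | x, .bdia φ => ∃ y, R y x ∧ sat R V y φ

/-- `rsharp R k x` is the set `R#^k[x]` of points reachable from `x`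
in at most `k` forward/backward `R`-steps. -/
def rsharp (R : X → X → Prop) : ℕ → X → Set X
  | 0, x => {x}
  | k+1, x => rsharp R k x ∪ {z | ∃ y ∈ rsharp R k x, R y z} ∪ {z | ∃ y ∈ rsharp R k x, R z y}

/-- `R#^ω[x]`. -/
def rsharpOmega (R : X → X → Prop) (x : X) : Set X := ⋃ k, rsharp R k x

/-- A frame is rooted (connected) if every point reaches every other. -/
def Rooted (R : X → X → Prop) : Prop := ∀ x y : X, y ∈ rsharpOmega R x

/-- Modal degree of a tense formula. -/
def md : TForm → ℕ
  | .var _ => 0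
  | .bot => 0
  | .imp φ ψ => max (md φ) (md ψ)
  | .box φ => md φ + 1
  | .bdia φ => md φ + 1

/-- Truth at a point of a general frame, under all admissible valuations. -/
def validAt {X : Type*} (R : X → X → Prop) (A : Set (Set X)) (x : X) (φ : TForm) : Prop :=
  ∀ V : ℕ → Set X, (∀ n, V n ∈ A) → sat R (fun n y => y ∈ V n) x φ

lemma mem_rsharp_self {X : Type*} (R : X → X → Prop) (x : X) : ∀ k, x ∈ rsharp R k x
  | 0 => rfl
  | k+1 => by
      have := mem_rsharp_self R x k
      simp only [rsharp, Set.mem_union]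
      exact Or.inl (Or.inl this)

/-!
A point one step from `y` sees within `k` steps only points within `k + 1` steps of `y`, so by
induction on `φ` its truth at `x` only inspects `R#^{md φ}[x]` and is unchanged in any subframe
containing that set. The admissible valuations of the subframe are exactly the restrictions of
admissible valuations of the whole frame, which transfers the equivalence to validity.
-/

variable {R : X → X → Prop}

lemma rsharp_monotone (x : X) : Monotone fun k => rsharp R k x :=
  monotone_nat_of_le_succ fun _ _ h => Or.inl (Or.inl h)

lemma rsharp_succ_subset_succ {y z : X} {k l : ℕ} (h : rsharp R k z ⊆ rsharp R l y) :
    rsharp R (k + 1) z ⊆ rsharp R (l + 1) y := by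
  rintro w ((hw | ⟨u, hu, hr⟩) | ⟨u, hu, hr⟩)
  · exact Or.inl (Or.inl (h hw))
  · exact Or.inl (Or.inr ⟨u, h hu, hr⟩)
  · exact Or.inr ⟨u, h hu, hr⟩

lemma rsharp_subset_add {y z : X} {j : ℕ} (hz : z ∈ rsharp R j y) :
    ∀ k, rsharp R k z ⊆ rsharp R (j + k) y
  | 0 => Set.singleton_subset_iff.2 hz
  | k + 1 => rsharp_succ_subset_succ (rsharp_subset_add hz k)

lemma mem_rsharp_one_of_rel {y z : X} (h : R y z) : z ∈ rsharp R 1 y :=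
  Or.inl (Or.inr ⟨y, rfl, h⟩)

lemma mem_rsharp_one_of_rel_symm {y z : X} (h : R z y) : z ∈ rsharp R 1 y :=
  Or.inr ⟨y, rfl, h⟩

lemma rsharp_subset_of_mem_rsharp_one {S : Set X} {y z : X} {k : ℕ} (hz : z ∈ rsharp R 1 y)
    (hS : rsharp R (k + 1) y ⊆ S) : z ∈ S ∧ rsharp R k z ⊆ S :=
  ⟨hS (rsharp_monotone y (Nat.le_add_left 1 k) hz),
    (rsharp_subset_add hz k).trans (Nat.add_comm 1 k ▸ hS)⟩

theorem sat_subtype_iff (V : ℕ → X → Prop) (S : Set X) :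
    ∀ (φ : TForm) {y : X} (hy : y ∈ S), rsharp R (md φ) y ⊆ S →
      (sat R V y φ ↔ sat (fun a b : S => R a b) (fun n a => V n a) ⟨y, hy⟩ φ)
  | .var _, _, _, _ => Iff.rfl
  | .bot, _, _, _ => Iff.rfl
  | .imp φ ψ, _, hy, hS =>
      imp_congr
        (sat_subtype_iff V S φ hy ((rsharp_monotone _ (le_max_left _ _)).trans hS))
        (sat_subtype_iff V S ψ hy ((rsharp_monotone _ (le_max_right _ _)).trans hS))
  | .box φ, _, _, hS => by
      simp only [sat, Subtype.forall]
      refine forall_congr' fun z => ⟨fun h hz hr => ?_, fun h hr => ?_⟩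
      · have hzS := (rsharp_subset_of_mem_rsharp_one (mem_rsharp_one_of_rel hr) hS).2
        exact (sat_subtype_iff V S φ hz hzS).1 (h hr)
      · obtain ⟨hz, hzS⟩ := rsharp_subset_of_mem_rsharp_one (mem_rsharp_one_of_rel hr) hS
        exact (sat_subtype_iff V S φ hz hzS).2 (h hz hr)
  | .bdia φ, _, _, hS => by
      simp only [sat, Subtype.exists]
      refine exists_congr fun z => ⟨fun ⟨hr, h⟩ => ?_, fun ⟨hz, hr, h⟩ => ?_⟩
      · obtain ⟨hz, hzS⟩ :=
          rsharp_subset_of_mem_rsharp_one (mem_rsharp_one_of_rel_symm hr) hS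
        exact ⟨hz, hr, (sat_subtype_iff V S φ hz hzS).1 h⟩
      · have hzS := (rsharp_subset_of_mem_rsharp_one (mem_rsharp_one_of_rel_symm hr) hS).2
        exact ⟨hr, (sat_subtype_iff V S φ hz hzS).2 h⟩

theorem validAt_subtype_iff (A : Set (Set X)) {S : Set X} {x : X} (hx : x ∈ S) {φ : TForm}
    (hS : rsharp R (md φ) x ⊆ S) :
    validAt R A x φ ↔
      validAt (fun a b : S => R a b) {T | ∃ U ∈ A, T = Subtype.val ⁻¹' U} ⟨x, hx⟩ φ := by
  constructor
  · intro H V hV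
    choose U hU hVU using hV
    obtain rfl : V = fun n => Subtype.val ⁻¹' U n := funext hVU
    exact (sat_subtype_iff (fun n y => y ∈ U n) S φ hx hS).1 (H U hU)
  · intro H V hV
    exact (sat_subtype_iff _ S φ hx hS).2 (H _ fun n => ⟨V n, hV n, rfl⟩)

theorem stmt2_general (X : Type) (R : X → X → Prop) (A : Set (Set X))
    (x : X) (φ : TForm) :
    validAt R A x φ ↔
      validAt (X := (rsharp R (md φ) x : Set X)) (fun a b => R a.1 b.1)
        {S | ∃ U ∈ A, S = Subtype.val ⁻¹' U}
        ⟨x, mem_rsharp_self R x (md φ)⟩ φ :=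
  validAt_subtype_iff A _ subset_rfl

/-- truth of `φ` at `x` in a general frame depends only on the part
reachable in `md φ` steps: `F, x ⊨ φ` iff `F ↾ R#^{md φ}[x], x ⊨ φ`. -/
theorem stmt2 (X : Type) (R : X → X → Prop) (A : Set (Set X))
    (h_empty : ∅ ∈ A) (h_inter : ∀ U V, U ∈ A → V ∈ A → U ∩ V ∈ A)
    (h_compl : ∀ U ∈ A, Uᶜ ∈ A)
    (h_fwd : ∀ U ∈ A, {z | ∃ y ∈ U, R y z} ∈ A)
    (h_bwd : ∀ U ∈ A, {z | ∃ y ∈ U, R z y} ∈ A)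
    (x : X) (φ : TForm) :
    validAt R A x φ ↔
      validAt (X := (rsharp R (md φ) x : Set X)) (fun a b => R a.1 b.1)
        {S | ∃ U ∈ A, S = Subtype.val ⁻¹' U}
        ⟨x, mem_rsharp_self R x (md φ)⟩ φ :=
  stmt2_general X R A x φ
end

section
/- An element x of a complete lattice L splits L (i.e., there is a y such that for all z, exactly one of z ≤ x and y ≤ z holds) if and only if x is completely meet-prime: for every family {yᵢ}, ⋀ᵢ yᵢ ≤ x implies yᵢ ≤ x for some i. -/
/-! The upper set of `y` is the complement of the lower set of `x` exactly when `(x, y)` splits,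
so the only possible partner of `x` is `⨅ {z | ¬ z ≤ x}`, and it is one precisely when this meet
is itself not below `x`, which is what complete meet-primality guarantees. -/

/-- `(x, y)` is a splitting pair: for every `z`, exactly one of `z ≤ x`, `y ≤ z` holds. -/
def IsSplittingPair {L : Type*} [CompleteLattice L] (x y : L) : Prop :=
  ∀ z : L, Xor' (z ≤ x) (y ≤ z)

section

variable {L : Type*} [CompleteLattice L] {x y : L}

theorem isSplittingPair_iff_forall_le_iff_not_le :
    IsSplittingPair x y ↔ ∀ z, y ≤ z ↔ ¬ z ≤ x :=
  forall_congr' fun _ => xor_iff_not_iff'.trans Iff.comm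

namespace IsSplittingPair

theorem le_iff_not_le (h : IsSplittingPair x y) (z : L) : y ≤ z ↔ ¬ z ≤ x :=
  isSplittingPair_iff_forall_le_iff_not_le.1 h z

theorem not_le (h : IsSplittingPair x y) : ¬ y ≤ x :=
  fun hyx => (h.le_iff_not_le x).1 hyx le_rfl

theorem exists_le_of_sInf_le (h : IsSplittingPair x y) {S : Set L} (hS : sInf S ≤ x) :
    ∃ s ∈ S, s ≤ x := by
  by_contra! hS'
  have hyS : y ≤ sInf S := le_sInf fun s hs => (h.le_iff_not_le s).2 (hS' s hs)
  exact h.not_le (hyS.trans hS)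

theorem sInf_setOf_not_le (h : ∀ S : Set L, sInf S ≤ x → ∃ s ∈ S, s ≤ x) :
    IsSplittingPair x (sInf {z | ¬ z ≤ x}) := by
  refine isSplittingPair_iff_forall_le_iff_not_le.2 fun z =>
    ⟨fun hz hzx => ?_, fun hz => sInf_le hz⟩
  obtain ⟨w, hw, hwx⟩ := h _ (hz.trans hzx)
  exact hw hwx

end IsSplittingPair

end

/-- `x` splits a complete lattice iff `x` is completely meet-prime. -/
theorem stmt7 {L : Type*} [CompleteLattice L] (x : L) :
    (∃ y : L, IsSplittingPair x y) ↔
      (∀ S : Set L, sInf S ≤ x → ∃ y ∈ S, y ≤ x) :=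
  ⟨fun ⟨_, h⟩ _ hS => h.exists_le_of_sInf_le hS,
    fun h => ⟨_, IsSplittingPair.sInf_setOf_not_le h⟩⟩
end

section
/- Let F = (X,R) and G = (Y,S) be frames with disjoint domains, w ∈ X, u ∈ Y, and (Z,T) their combination at (w,u). Then for x ∈ X and y ∈ Y \ {u}: T^t x y holds if and only if (R^t)^r x w and S^t u y, where (·)^t is transitive closure and (·)^r is reflexive closure. -/
/-!
Collapsing `Y \ {u}` onto `w` and `X` onto `u` are relation homomorphisms from `T` into
`R^*` and `S^*` respectively, which gives the forward direction; conversely an `R`-path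
from `x` to `w` followed by an `S`-path from `u` to `y`, read with `u` renamed to `w`,
is a `T`-path. Since `inl x ≠ inr y` and `u ≠ y`, transitive and reflexive-transitive
closure agree at both ends.
-/

/-- Carrier of the combination `⟨F w+u G⟩`: the disjoint union of `X` and `Y`
with the point `u` of `Y` deleted (and `w` taking its place). -/
abbrev Comb (X Y : Type*) (u : Y) := X ⊕ {y : Y // y ≠ u}

/-- The relation `T` of the combination `⟨F w+u G⟩`. -/
def combRel {X Y : Type*} (R : X → X → Prop) (S : Y → Y → Prop) (w : X) (u : Y) :
    Comb X Y u → Comb X Y u → Prop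
  | .inl a, .inl b => R a b
  | .inr a, .inr b => S a.1 b.1
  | .inl a, .inr b => a = w ∧ S u b.1
  | .inr a, .inl b => b = w ∧ S a.1 u

open Relation

theorem Relation.transGen_iff_reflTransGen_of_ne {α : Type*} {r : α → α → Prop} {a b : α}
    (h : a ≠ b) : TransGen r a b ↔ ReflTransGen r a b := by
  rw [reflTransGen_iff_eq_or_transGen, or_iff_right h.symm]

namespace Comb

variable {X Y : Type*} {R : X → X → Prop} {S : Y → Y → Prop} {w : X} {u : Y}

def toLeft (w : X) : Comb X Y u → X
  | .inl a => a
  | .inr _ => w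

def toRight : Comb X Y u → Y
  | .inl _ => u
  | .inr b => b.1

open Classical in
noncomputable def ofRight (w : X) (u : Y) (v : Y) : Comb X Y u :=
  if h : v = u then .inl w else .inr ⟨v, h⟩

@[simp]
theorem ofRight_self : ofRight w u u = .inl w := dif_pos rfl

@[simp]
theorem ofRight_of_ne {v : Y} (hv : v ≠ u) : ofRight w u v = .inr ⟨v, hv⟩ := dif_neg hv

theorem reflTransGen_toLeft {c d : Comb X Y u} (h : ReflTransGen (combRel R S w u) c d) :
    ReflTransGen R (toLeft w c) (toLeft w d) := by
  refine h.lift' (toLeft w) fun c d hcd => ?_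
  match c, d, hcd with
  | .inl _, .inl _, hab => exact .single hab
  | .inr _, .inr _, _ => exact .refl
  | .inl _, .inr _, ⟨rfl, _⟩ => exact .refl
  | .inr _, .inl _, ⟨rfl, _⟩ => exact .refl

theorem reflTransGen_toRight {c d : Comb X Y u} (h : ReflTransGen (combRel R S w u) c d) :
    ReflTransGen S (toRight c) (toRight d) := by
  refine h.lift' toRight fun c d hcd => ?_
  match c, d, hcd with
  | .inl _, .inl _, _ => exact .refl
  | .inr _, .inr _, hab => exact .single hab
  | .inl _, .inr _, ⟨_, hub⟩ => exact .single hub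
  | .inr _, .inl _, ⟨_, hau⟩ => exact .single hau

theorem reflTransGen_ofRight {a b : Y} (h : ReflTransGen S a b) :
    ReflTransGen (combRel R S w u) (ofRight w u a) (ofRight w u b) := by
  refine h.lift' (ofRight w u) fun a b hab => ?_
  simp only [Function.onFun, ofRight]
  split_ifs with ha hb hb
  · rfl
  · exact .single ⟨rfl, ha ▸ hab⟩
  · exact .single ⟨rfl, hb ▸ hab⟩
  · exact .single hab

theorem reflTransGen_combRel_inl_inr_iff {x : X} {y : Y} (hy : y ≠ u) :
    ReflTransGen (combRel R S w u) (.inl x) (.inr ⟨y, hy⟩) ↔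
      ReflTransGen R x w ∧ ReflTransGen S u y := by
  refine ⟨fun h => ⟨reflTransGen_toLeft h, reflTransGen_toRight h⟩, fun ⟨hxw, huy⟩ => ?_⟩
  have hx : ReflTransGen (combRel R S w u) (.inl x) (.inl w) := hxw.lift Sum.inl fun _ _ => id
  have hwy := reflTransGen_ofRight (R := R) (w := w) (u := u) huy
  rw [ofRight_self, ofRight_of_ne hy] at hwy
  exact hx.trans hwy

end Comb

/-- for `x ∈ X` and `y ∈ Y \ {u}`, `T^t x y` holds iff
`(R^t)^r x w` and `S^t u y`. -/
theorem stmt10 {X Y : Type*} (R : X → X → Prop) (S : Y → Y → Prop) (w : X) (u : Y)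
    (x : X) (y : Y) (hy : y ≠ u) :
    Relation.TransGen (combRel R S w u) (.inl x) (.inr ⟨y, hy⟩) ↔
      (Relation.ReflTransGen R x w ∧ Relation.TransGen S u y) := by
  rw [transGen_iff_reflTransGen_of_ne Sum.inl_ne_inr, transGen_iff_reflTransGen_of_ne hy.symm]
  exact Comb.reflTransGen_combRel_inl_inr_iff hy
end

section
/- Let F = (X,R) be a rooted frame, w ≠ u ∈ X, n ∈ ω, and let (Y,S) = F^{4n+2}_{w,u} be the (4n+2)-fold reflective unfolding. Then for every point x_k of Y, the one-step reachability set S#[x_k] is contained in the union of the copies X[i] with k-1 ≤ i ≤ k+1; consequently S#^n[x_k] ≠ Y, so the reachability degree of F^{4n+2}_{w,u} exceeds n. -/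
variable {X : Type*}

/-- Carrier of the `n`-fold reflective unfolding `F^n_{w,u}`: pairs `(x, k)`
with `k < n`, where in the `k`-th copy (`k ≥ 1`) the point identified with a
point of the previous copy is removed: `u` for odd `k`, `w` for even `k`. -/
def Unf {X : Type*} (w u : X) (n : ℕ) : Type _ :=
  {p : X × ℕ // p.2 < n ∧ (p.2 = 0 ∨ ((p.2 % 2 = 1 → p.1 ≠ u) ∧ (p.2 % 2 = 0 → p.1 ≠ w)))}

/-- The relation of the reflective unfolding on labelled points: within a copy
it is `R`; consecutive copies `k, k+1` are linked through `u` (for even `k`)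
resp. `w` (for odd `k`), which plays the role of the deleted point of copy `k+1`. -/
def unfRelAux {X : Type*} (R : X → X → Prop) (w u : X) : X × ℕ → X × ℕ → Prop :=
  fun a b =>
    (a.2 = b.2 ∧ R a.1 b.1) ∨
    (b.2 = a.2 + 1 ∧ ((a.2 % 2 = 0 ∧ a.1 = u ∧ R u b.1) ∨ (a.2 % 2 = 1 ∧ a.1 = w ∧ R w b.1))) ∨
    (a.2 = b.2 + 1 ∧ ((b.2 % 2 = 0 ∧ b.1 = u ∧ R a.1 u) ∨ (b.2 % 2 = 1 ∧ b.1 = w ∧ R a.1 w)))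

/-- The relation of the reflective unfolding `F^n_{w,u}`. -/
def unfRel {X : Type*} (R : X → X → Prop) (w u : X) (n : ℕ) :
    Unf w u n → Unf w u n → Prop :=
  fun a b => unfRelAux R w u a.1 b.1

section Reachability

variable {Y : Type*} {R : X → X → Prop}

lemma mem_rsharp_add {m j : ℕ} {a b c : X}
    (hb : b ∈ rsharp R m a) (hc : c ∈ rsharp R j b) : c ∈ rsharp R (m + j) a := by
  induction j generalizing c with
  | zero => exact (show c = b from hc) ▸ hb
  | succ k ih =>
    rcases hc with (h | ⟨y, hy, hyc⟩) | ⟨y, hy, hcy⟩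
    · exact Or.inl (Or.inl (ih h))
    · exact Or.inl (Or.inr ⟨y, ih hy, hyc⟩)
    · exact Or.inr ⟨y, ih hy, hcy⟩

lemma mem_rsharpOmega_trans {a b c : X}
    (hb : b ∈ rsharpOmega R a) (hc : c ∈ rsharpOmega R b) : c ∈ rsharpOmega R a := by
  obtain ⟨m, hb⟩ := Set.mem_iUnion.1 hb
  obtain ⟨j, hc⟩ := Set.mem_iUnion.1 hc
  exact Set.mem_iUnion.2 ⟨m + j, mem_rsharp_add hb hc⟩

lemma mem_rsharp_map {S : Y → Y → Prop} (f : X → Y) (hf : ∀ x y, R x y → S (f x) (f y))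
    {m : ℕ} {x y : X} (h : y ∈ rsharp R m x) : f y ∈ rsharp S m (f x) := by
  induction m generalizing y with
  | zero => exact congrArg f (show y = x from h)
  | succ j ih =>
    rcases h with (h | ⟨z, hz, hzy⟩) | ⟨z, hz, hyz⟩
    · exact Or.inl (Or.inl (ih h))
    · exact Or.inl (Or.inr ⟨f z, ih hz, hf z y hzy⟩)
    · exact Or.inr ⟨f z, ih hz, hf y z hyz⟩

lemma mem_rsharpOmega_map {S : Y → Y → Prop} (f : X → Y) (hf : ∀ x y, R x y → S (f x) (f y))
    {x y : X} (h : y ∈ rsharpOmega R x) : f y ∈ rsharpOmega S (f x) := by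
  obtain ⟨m, h⟩ := Set.mem_iUnion.1 h
  exact Set.mem_iUnion.2 ⟨m, mem_rsharp_map f hf h⟩

lemma height_le_of_mem_rsharp (d : X → ℕ) (hd : ∀ x y, R x y → d x ≤ d y + 1 ∧ d y ≤ d x + 1)
    {m : ℕ} {x y : X} (h : y ∈ rsharp R m x) : d y ≤ d x + m ∧ d x ≤ d y + m := by
  induction m generalizing y with
  | zero => rw [show y = x from h]; omega
  | succ j ih =>
    rcases h with (h | ⟨z, hz, hzy⟩) | ⟨z, hz, hyz⟩
    · have := ih h; omega
    · have := ih hz; have := hd z y hzy; omega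
    · have := ih hz; have := hd y z hyz; omega

end Reachability

section Unfolding

variable {w u : X}

lemma unfRelAux_snd_le {R : X → X → Prop} {a b : X × ℕ} (h : unfRelAux R w u a b) :
    a.2 ≤ b.2 + 1 ∧ b.2 ≤ a.2 + 1 := by
  rcases h with ⟨h, _⟩ | ⟨h, _⟩ | ⟨h, _⟩ <;> omega

lemma snd_le_of_mem_rsharp_unfRel {R : X → X → Prop} {N m : ℕ} {p q : Unf w u N}
    (h : q ∈ rsharp (unfRel R w u N) m p) : q.1.2 ≤ p.1.2 + m ∧ p.1.2 ≤ q.1.2 + m :=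
  height_le_of_mem_rsharp (fun p => p.1.2) (fun _ _ => unfRelAux_snd_le) h

/-- Copies `k` and `k + 1` are glued at `linkPt w u k`, the point deleted from copy `k + 1`. -/
def linkPt (w u : X) (k : ℕ) : X := if k % 2 = 0 then u else w

lemma linkPt_succ_ne (hwu : w ≠ u) (k : ℕ) : linkPt w u (k + 1) ≠ linkPt w u k := by
  unfold linkPt
  split_ifs <;> first | omega | exact hwu | exact hwu.symm

open Classical in
/-- Copy `k` of `X` inside the unfolding: its deleted point is the link point of copy `k - 1`. -/
noncomputable def copyEmb (w u : X) (k : ℕ) (x : X) : X × ℕ :=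
  if k ≠ 0 ∧ x = linkPt w u (k - 1) then (x, k - 1) else (x, k)

lemma copyEmb_valid (hwu : w ≠ u) {N k : ℕ} (hk : k < N) (x : X) :
    (copyEmb w u k x).2 < N ∧ ((copyEmb w u k x).2 = 0 ∨
      (((copyEmb w u k x).2 % 2 = 1 → (copyEmb w u k x).1 ≠ u) ∧
       ((copyEmb w u k x).2 % 2 = 0 → (copyEmb w u k x).1 ≠ w))) := by
  rcases k with _ | k
  · simp [copyEmb, hk]
  have hk' : k < N := k.lt_succ_self.trans hk
  rcases Nat.mod_two_eq_zero_or_one k with h | h <;>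
    by_cases hx : x = linkPt w u k <;>
    simp_all [copyEmb, linkPt, Nat.succ_mod_two_eq_zero_iff, Nat.succ_mod_two_eq_one_iff, Ne.symm hwu]

lemma copyEmb_hom (R : X → X → Prop) (k : ℕ) {x y : X} (hxy : R x y) :
    unfRelAux R w u (copyEmb w u k x) (copyEmb w u k y) := by
  rcases k with _ | k
  · simp [copyEmb, unfRelAux, hxy]
  rcases Nat.mod_two_eq_zero_or_one k with h | h <;>
    by_cases hx : x = linkPt w u k <;> by_cases hy : y = linkPt w u k <;>
    simp_all [copyEmb, unfRelAux, linkPt]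

lemma copyEmb_linkPt (hwu : w ≠ u) (k : ℕ) : copyEmb w u k (linkPt w u k) = (linkPt w u k, k) := by
  rw [copyEmb, if_neg]
  rintro ⟨hk, h⟩
  obtain ⟨j, rfl⟩ := Nat.exists_eq_succ_of_ne_zero hk
  exact linkPt_succ_ne hwu j h

lemma copyEmb_succ_linkPt (hwu : w ≠ u) (k : ℕ) :
    copyEmb w u (k + 1) (linkPt w u k) = copyEmb w u k (linkPt w u k) := by
  rw [copyEmb_linkPt hwu, copyEmb, if_pos ⟨k.succ_ne_zero, rfl⟩]
  rfl

noncomputable def copyIncl (hwu : w ≠ u) {N k : ℕ} (hk : k < N) (x : X) : Unf w u N :=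
  ⟨copyEmb w u k x, copyEmb_valid hwu hk x⟩

lemma copyIncl_mem_rsharpOmega {R : X → X → Prop} (hroot : Rooted R) (hwu : w ≠ u) {N : ℕ}
    (hN : 0 < N) (k : ℕ) (hk : k < N) (x : X) :
    copyIncl hwu hk x ∈ rsharpOmega (unfRel R w u N) (copyIncl hwu hN u) := by
  have hom (j : ℕ) (hj : j < N) : ∀ x y, R x y →
      unfRel R w u N (copyIncl hwu hj x) (copyIncl hwu hj y) := fun _ _ => copyEmb_hom R j
  induction k generalizing x with
  | zero => exact mem_rsharpOmega_map _ (hom 0 hk) (hroot u x)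
  | succ k ih =>
    have hk' : k < N := k.lt_succ_self.trans hk
    have hglue : copyIncl hwu hk (linkPt w u k) = copyIncl hwu hk' (linkPt w u k) :=
      Subtype.ext (copyEmb_succ_linkPt hwu k)
    refine mem_rsharpOmega_trans (ih hk' (linkPt w u k)) ?_
    rw [← hglue]
    exact mem_rsharpOmega_map _ (hom (k + 1) hk) (hroot _ x)

lemma copyIncl_linkPt_not_mem_rsharp {R : X → X → Prop} (hwu : w ≠ u) {N m j : ℕ} (hj : j < N)
    {p : Unf w u N} (hfar : p.1.2 + m < j ∨ j + m < p.1.2) :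
    copyIncl hwu hj (linkPt w u j) ∉ rsharp (unfRel R w u N) m p := by
  intro h
  have := snd_le_of_mem_rsharp_unfRel h
  simp only [copyIncl, copyEmb_linkPt hwu] at this
  omega

end Unfolding

theorem stmt12_general {X : Type*} (R : X → X → Prop) (hroot : Rooted R)
    (w u : X) (hwu : w ≠ u) (n : ℕ) :
    (∀ p q : Unf w u (4*n+2), q ∈ rsharp (unfRel R w u (4*n+2)) 1 p →
        p.1.2 ≤ q.1.2 + 1 ∧ q.1.2 ≤ p.1.2 + 1) ∧
    (∀ p : Unf w u (4*n+2), rsharp (unfRel R w u (4*n+2)) n p ≠ Set.univ) ∧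
    (∃ p : Unf w u (4*n+2),
        rsharp (unfRel R w u (4*n+2)) n p ≠ rsharpOmega (unfRel R w u (4*n+2)) p) := by
  refine ⟨fun p q hq => (snd_le_of_mem_rsharp_unfRel hq).symm, fun p hp => ?_, ?_⟩
  · have hpN : p.1.2 < 4*n+2 := p.2.1
    obtain ⟨j, hj, hfar⟩ : ∃ j < 4*n+2, p.1.2 + n < j ∨ j + n < p.1.2 := by
      by_cases hc : p.1.2 ≤ 2*n
      · exact ⟨p.1.2 + n + 1, by omega, by omega⟩
      · exact ⟨p.1.2 - (n + 1), by omega, by omega⟩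
    exact copyIncl_linkPt_not_mem_rsharp hwu hj hfar (hp ▸ Set.mem_univ _)
  · have h0 : 0 < 4*n+2 := by omega
    have hn1 : n + 1 < 4*n+2 := by omega
    have hbase : (copyIncl hwu h0 u).1 = (u, 0) := by simp [copyIncl, copyEmb]
    refine ⟨copyIncl hwu h0 u, fun h => copyIncl_linkPt_not_mem_rsharp hwu hn1 ?_
      (h ▸ copyIncl_mem_rsharpOmega hroot hwu h0 (n + 1) hn1 _)⟩
    rw [hbase]
    omega

/-- in the `(4n+2)`-fold reflective unfolding of a rooted frame
(with `w ≠ u`), one `S#`-step from a point of copy `k` stays within copies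
`k-1, k, k+1`; hence `S#^n[x_k] ≠ Y` and the reachability degree of the
unfolding exceeds `n`. -/
theorem stmt12 {X : Type*} [Nonempty X] (R : X → X → Prop) (hroot : Rooted R)
    (w u : X) (hwu : w ≠ u) (n : ℕ) :
    (∀ p q : Unf w u (4*n+2), q ∈ rsharp (unfRel R w u (4*n+2)) 1 p →
        p.1.2 ≤ q.1.2 + 1 ∧ q.1.2 ≤ p.1.2 + 1) ∧
    (∀ p : Unf w u (4*n+2), rsharp (unfRel R w u (4*n+2)) n p ≠ Set.univ) ∧
    (∃ p : Unf w u (4*n+2),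
        rsharp (unfRel R w u (4*n+2)) n p ≠ rsharpOmega (unfRel R w u (4*n+2)) p) :=
  stmt12_general R hroot w u hwu n
end

section
/- Let F = (X,R,A) be a rooted general frame, G = (Y,S) a rooted Kripke frame, and f : F ↠ G a surjective t-morphism. If Z ⊆ X is sufficient — meaning for every z ∈ Z there exist u,v ∈ Z with f(z)=f(u)=f(v), R[u] ⊆ Z and R⁻¹[v] ⊆ Z — and Z is nonempty, then f[Z] = Y. -/
variable {X : Type*}

/-- A general frame `(X,R,A)`. -/
structure GenFrame where
  carrier : Type
  rel : carrier → carrier → Prop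
  sets : Set (Set carrier)
  carrier_nonempty : Nonempty carrier
  empty_mem : ∅ ∈ sets
  inter_mem : ∀ U V, U ∈ sets → V ∈ sets → U ∩ V ∈ sets
  compl_mem : ∀ U ∈ sets, Uᶜ ∈ sets
  fwd_mem : ∀ U ∈ sets, {z | ∃ y ∈ U, rel y z} ∈ sets
  bwd_mem : ∀ U ∈ sets, {z | ∃ y ∈ U, rel z y} ∈ sets

/-- `f` is a t-morphism between the frames `(X,R)` and `(Y,S)`:
`f[R[x]] = S[f x]` and `f[R⁻¹[x]] = S⁻¹[f x]` for all `x`. -/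
def IsTMorphism {X Y : Type*} (R : X → X → Prop) (S : Y → Y → Prop) (f : X → Y) : Prop :=
  ∀ x : X, (f '' {z | R x z} = {z | S (f x) z}) ∧ (f '' {z | R z x} = {z | S z (f x)})

section

variable {Y : Type*}

theorem rsharp_subset_of_closed {S : Y → Y → Prop} {W : Set Y}
    (hfwd : ∀ y ∈ W, ∀ y', S y y' → y' ∈ W) (hbwd : ∀ y ∈ W, ∀ y', S y' y → y' ∈ W)
    {y : Y} (hy : y ∈ W) : ∀ k, rsharp S k y ⊆ W
  | 0 => Set.singleton_subset_iff.mpr hy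
  | k + 1 => by
    have ih := rsharp_subset_of_closed hfwd hbwd hy k
    rintro z ((hz | ⟨w, hw, hwz⟩) | ⟨w, hw, hzw⟩)
    · exact ih hz
    · exact hfwd w (ih hw) z hwz
    · exact hbwd w (ih hw) z hzw

theorem Rooted.eq_univ_of_closed {S : Y → Y → Prop} (hS : Rooted S) {W : Set Y}
    (hfwd : ∀ y ∈ W, ∀ y', S y y' → y' ∈ W) (hbwd : ∀ y ∈ W, ∀ y', S y' y → y' ∈ W)
    {y : Y} (hy : y ∈ W) : W = Set.univ := by
  refine Set.eq_univ_of_forall fun y' => ?_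
  obtain ⟨k, hk⟩ := Set.mem_iUnion.mp (hS y y')
  exact rsharp_subset_of_closed hfwd hbwd hy k hk

def IsSufficient (R : X → X → Prop) (f : X → Y) (Z : Set X) : Prop :=
  ∀ z ∈ Z, ∃ u ∈ Z, ∃ v ∈ Z, f z = f u ∧ f z = f v ∧ {a | R u a} ⊆ Z ∧ {a | R a v} ⊆ Z

namespace IsTMorphism

variable {R : X → X → Prop} {S : Y → Y → Prop} {f : X → Y} {Z : Set X}

theorem image_mem_of_rel (hf : IsTMorphism R S f) (hZ : IsSufficient R f Z) :
    ∀ y ∈ f '' Z, ∀ y', S y y' → y' ∈ f '' Z := by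
  rintro _ ⟨z, hz, rfl⟩ y' hzy'
  obtain ⟨u, -, -, -, hzu, -, hRu, -⟩ := hZ z hz
  have : y' ∈ f '' {a | R u a} := by rwa [(hf u).1, ← hzu]
  exact Set.image_mono hRu this

theorem image_mem_of_rel_inv (hf : IsTMorphism R S f) (hZ : IsSufficient R f Z) :
    ∀ y ∈ f '' Z, ∀ y', S y' y → y' ∈ f '' Z := by
  rintro _ ⟨z, hz, rfl⟩ y' hy'z
  obtain ⟨-, -, v, -, -, hzv, -, hRv⟩ := hZ z hz
  have : y' ∈ f '' {a | R a v} := by rwa [(hf v).2, ← hzv]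
  exact Set.image_mono hRv this

end IsTMorphism

end

theorem stmt15_general {Y : Type*} (F : GenFrame) (S : Y → Y → Prop)
    (hG : Rooted S)
    (f : F.carrier → Y)
    (hmor : IsTMorphism F.rel S f)
    (Z : Set F.carrier) (hne : Z.Nonempty)
    (hsuff : ∀ z ∈ Z, ∃ u ∈ Z, ∃ v ∈ Z, f z = f u ∧ f z = f v ∧
      {a | F.rel u a} ⊆ Z ∧ {a | F.rel a v} ⊆ Z) :
    f '' Z = Set.univ := by
  obtain ⟨z, hz⟩ := hne
  exact hG.eq_univ_of_closed (hmor.image_mem_of_rel hsuff) (hmor.image_mem_of_rel_inv hsuff)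
    (Set.mem_image_of_mem f hz)

/-- if `f` is a surjective t-morphism from a rooted general frame
onto a rooted Kripke frame and `Z` is a nonempty sufficient set, then `f[Z] = Y`. -/
theorem stmt15 {Y : Type*} (F : GenFrame) (S : Y → Y → Prop)
    (hF : Rooted F.rel) (hG : Rooted S)
    (f : F.carrier → Y) (hsurj : Function.Surjective f)
    (hmor : IsTMorphism F.rel S f)
    (Z : Set F.carrier) (hne : Z.Nonempty)
    (hsuff : ∀ z ∈ Z, ∃ u ∈ Z, ∃ v ∈ Z, f z = f u ∧ f z = f v ∧
      {a | F.rel u a} ⊆ Z ∧ {a | F.rel a v} ⊆ Z) :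
    f '' Z = Set.univ :=
  stmt15_general F S hG f hmor Z hne hsuff
end

section
/- Let F = (X,R) be a transitive frame whose depth is at most k (no strict chain of length > k in any R[x]) and whose forth-width is at most k (no antichain of size > k in any R[x]), and in which every cluster has size at most k, and whose reachability degree is at most k. If F is rooted, then R#^ω[x] is finite for every x ∈ X; i.e., F is a finite frame. -/
variable {X : Type*}

/-!
Write `x < y` for the strict part `R x y ∧ ¬ R y x` of the transitive relation. In a set `S`
without `<`-chains of length `h + 1` and without infinite antichains, the `<`-minimal points
of `S` are finite: a maximal antichain `A` of minimal points is finite, and every minimal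
point comparable with some `a ∈ A` lies in the cluster of `a`, so the minimal points are
covered by finitely many finite clusters. Removing them shortens every chain, so `S` is finite
by induction on `h`. Bounded depth and widths thus make every `R[x]` and `R⁻¹[x]` finite, hence
every `R#^k[x]`, and rootedness with reachability degree `k` gives `X = R#^k[x₀]`.
-/

namespace KripkeFrame

variable {R : X → X → Prop}

def cluster (R : X → X → Prop) (x : X) : Set X := ({z | R x z} ∩ {z | R z x}) ∪ {x}

def HasStrictChain (R : X → X → Prop) (S : Set X) (n : ℕ) : Prop :=
  ∃ c : Fin n → X, (∀ i, c i ∈ S) ∧ ∀ i j, i < j → R (c i) (c j) ∧ ¬ R (c j) (c i)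

def HasAntichain (R : X → X → Prop) (S : Set X) (n : ℕ) : Prop :=
  ∃ c : Fin n → X,
    (∀ i, c i ∈ S) ∧ Function.Injective c ∧ ∀ i j, i ≠ j → ¬ R (c i) (c j)

def minimals (R : X → X → Prop) (S : Set X) : Set X := {x ∈ S | ∀ y ∈ S, R y x → R x y}

theorem strict_trans (htrans : Transitive R) {a b c : X}
    (hab : R a b ∧ ¬ R b a) (hbc : R b c ∧ ¬ R c b) : R a c ∧ ¬ R c a :=
  ⟨htrans hab.1 hbc.1, fun hca => hbc.2 (htrans hca hab.1)⟩

theorem HasStrictChain.cons (htrans : Transitive R) {S : Set X} {n : ℕ} {y : X}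
    {c : Fin (n + 1) → X} (hy : y ∈ S) (hyc : R y (c 0) ∧ ¬ R (c 0) y)
    (hcS : ∀ i, c i ∈ S) (hc : ∀ i j, i < j → R (c i) (c j) ∧ ¬ R (c j) (c i)) :
    HasStrictChain R S (n + 2) := by
  refine ⟨Fin.cons y c, Fin.cases hy hcS, fun i j hij => ?_⟩
  induction j using Fin.cases with
  | zero => exact absurd hij (Fin.not_lt_zero i)
  | succ j =>
    induction i using Fin.cases with
    | zero =>
      simp only [Fin.cons_zero, Fin.cons_succ]
      rcases (Fin.zero_le j).eq_or_lt with rfl | h0j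
      · exact hyc
      · exact strict_trans htrans hyc (hc 0 j h0j)
    | succ i => simpa using hc i j (Fin.succ_lt_succ_iff.mp hij)

theorem HasStrictChain.exists_forth {S : Set X} {n : ℕ} (h : HasStrictChain R S (n + 1)) :
    ∃ x, HasStrictChain R {z | R x z} n := by
  obtain ⟨c, -, hc⟩ := h
  exact ⟨c 0, fun i => c i.succ, fun i => (hc 0 i.succ (Fin.succ_pos i)).1,
    fun i j hij => hc i.succ j.succ (Fin.succ_lt_succ_iff.mpr hij)⟩

theorem IsAntichain.finite_of_not_hasAntichain {S A : Set X} {n : ℕ} (hA : IsAntichain R A)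
    (hAS : A ⊆ S) (hS : ¬ HasAntichain R S n) : A.Finite := by
  by_contra hinf
  let e := Set.Infinite.natEmbedding A hinf
  have he : Function.Injective fun i : Fin n => (e i : X) :=
    Subtype.val_injective.comp (e.injective.comp Fin.val_injective)
  exact hS ⟨fun i => e i, fun i => hAS (e i).2, he,
    fun i j hij => hA (e i).2 (e j).2 (he.ne hij)⟩

theorem mem_cluster_of_mem_minimals {S : Set X} {x a : X} (hx : x ∈ minimals R S)
    (ha : a ∈ minimals R S) (hxa : R x a ∨ R a x) : x ∈ cluster R a := by
  rcases hxa with h | h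
  · exact Or.inl ⟨ha.2 x hx.1 h, h⟩
  · exact Or.inl ⟨h, hx.2 a ha.1 h⟩

theorem isOfFiniteCharacter_isAntichain (T : Set X) :
    Order.IsOfFiniteCharacter {A | A ⊆ T ∧ IsAntichain R A} := by
  intro A
  refine ⟨fun hA B hBA _ => ⟨hBA.trans hA.1, hA.2.subset hBA⟩,
    fun h => ⟨fun a ha => ?_, fun a ha b hb hab => ?_⟩⟩
  · exact (h {a} (Set.singleton_subset_iff.mpr ha) (Set.finite_singleton a)).1 rfl
  · have hpair : {a, b} ⊆ A := Set.insert_subset ha (Set.singleton_subset_iff.mpr hb)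
    exact (h {a, b} hpair (Set.toFinite _)).2
      (Set.mem_insert a _) (Set.mem_insert_of_mem a rfl) hab

theorem finite_minimals {S : Set X} (hanti : ∀ A ⊆ S, IsAntichain R A → A.Finite)
    (hcl : ∀ x ∈ S, (cluster R x).Finite) : (minimals R S).Finite := by
  obtain ⟨A, -, hA⟩ := (isOfFiniteCharacter_isAntichain (minimals R S)).exists_maximal
    (x := ∅) ⟨Set.empty_subset _, Set.pairwise_empty _⟩
  have hAS : A ⊆ S := hA.prop.1.trans fun x hx => hx.1
  refine ((hanti A hAS hA.prop.2).biUnion fun a ha => hcl a (hAS ha)).subset fun x hx => ?_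
  by_contra hxA
  have hxA' : x ∉ A := fun h => hxA (Set.mem_biUnion h (Or.inr rfl))
  refine hxA' (hA.mem_of_prop_insert
    ⟨Set.insert_subset hx hA.prop.1, hA.prop.2.insert ?_ ?_⟩) <;>
    exact fun b hb _ hR =>
      hxA (Set.mem_biUnion hb (mem_cluster_of_mem_minimals hx (hA.prop.1 hb) (by tauto)))

theorem not_hasStrictChain_diff_minimals (htrans : Transitive R) {S : Set X} {n : ℕ}
    (hS : ¬ HasStrictChain R S (n + 2)) : ¬ HasStrictChain R (S \ minimals R S) (n + 1) := by
  rintro ⟨c, hcS, hc⟩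
  obtain ⟨y, hyS, hyc⟩ : ∃ y ∈ S, R y (c 0) ∧ ¬ R (c 0) y := by
    by_contra! h
    exact (hcS 0).2 ⟨(hcS 0).1, h⟩
  exact hS (HasStrictChain.cons htrans hyS hyc (fun i => (hcS i).1) hc)

theorem finite_of_not_hasStrictChain (htrans : Transitive R) (n : ℕ) {S : Set X}
    (hchain : ¬ HasStrictChain R S (n + 1)) (hanti : ∀ A ⊆ S, IsAntichain R A → A.Finite)
    (hcl : ∀ x ∈ S, (cluster R x).Finite) : S.Finite := by
  induction n generalizing S with
  | zero =>
    refine Set.Finite.subset Set.finite_empty fun x hx => hchain ?_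
    exact ⟨fun _ => x, fun _ => hx, fun i j hij => absurd hij (by omega)⟩
  | succ n ih =>
    have hrest : (S \ minimals R S).Finite :=
      ih (not_hasStrictChain_diff_minimals htrans hchain)
        (fun A hA => hanti A (hA.trans Set.sdiff_subset)) fun x hx => hcl x hx.1
    exact hrest.of_sdiff (finite_minimals hanti hcl)

theorem finite_rsharp (hforth : ∀ y, {z | R y z}.Finite) (hback : ∀ y, {z | R z y}.Finite)
    (n : ℕ) (x : X) : (rsharp R n x).Finite := by
  induction n with
  | zero => exact Set.finite_singleton x
  | succ n ih =>
    refine (ih.union ?_).union ?_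
    · exact (ih.biUnion fun y _ => hforth y).subset fun z ⟨y, hy, h⟩ => Set.mem_biUnion hy h
    · exact (ih.biUnion fun y _ => hback y).subset fun z ⟨y, hy, h⟩ => Set.mem_biUnion hy h

end KripkeFrame

open KripkeFrame in
/-- a rooted transitive frame of depth ≤ k, forth-width ≤ k
(and back-width ≤ k), cluster size ≤ k and reachability degree ≤ k is finite. -/
theorem stmt19 (X : Type) (R : X → X → Prop) (htrans : Transitive R) (k : ℕ)
    (hdepth : ¬ ∃ (x : X) (c : Fin (k+1) → X), (∀ i, R x (c i)) ∧
      (∀ i j : Fin (k+1), i < j → R (c i) (c j) ∧ ¬ R (c j) (c i)))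
    (hwidthF : ¬ ∃ (x : X) (c : Fin (k+1) → X), (∀ i, R x (c i)) ∧
      Function.Injective c ∧ ∀ i j : Fin (k+1), i ≠ j → ¬ R (c i) (c j))
    (hwidthB : ¬ ∃ (x : X) (c : Fin (k+1) → X), (∀ i, R (c i) x) ∧
      Function.Injective c ∧ ∀ i j : Fin (k+1), i ≠ j → ¬ R (c i) (c j))
    (hcluster : ∀ x : X, (({z | R x z} ∩ {z | R z x}) ∪ {x}).encard ≤ (k : ℕ∞))
    (hrdg : ∀ x : X, rsharp R k x = rsharpOmega R x)
    (hroot : Rooted R) :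
    Finite X := by
  have hcl : ∀ x, (cluster R x).Finite := fun x => Set.finite_of_encard_le_coe (hcluster x)
  have hforth : ∀ x, {z | R x z}.Finite := fun x =>
    finite_of_not_hasStrictChain htrans k (fun h => hdepth ⟨x, h⟩)
      (fun _ hA hanti => hanti.finite_of_not_hasAntichain hA fun h => hwidthF ⟨x, h⟩)
      fun y _ => hcl y
  have hback : ∀ x, {z | R z x}.Finite := fun x =>
    finite_of_not_hasStrictChain htrans (k + 1) (fun h => hdepth h.exists_forth)
      (fun _ hA hanti => hanti.finite_of_not_hasAntichain hA fun h => hwidthB ⟨x, h⟩)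
      fun y _ => hcl y
  rcases isEmpty_or_nonempty X with _ | ⟨⟨x₀⟩⟩
  · exact Finite.of_subsingleton
  · refine Set.finite_univ_iff.mp ((finite_rsharp hforth hback k x₀).subset fun y _ => ?_)
    exact hrdg x₀ ▸ hroot x₀ y
end
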